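/- If a synchronous algebra morphism φ: Sync(Σ) → A recognizes a relation R, then its consolidation φ₁: (Σ₂⊥)* → A₁ (a monoid morphism into the consolidated monoid, sending non-well-formed words to 0) recognizes R viewed as a language over Σ₂⊥. -/

import Mathlib

/-- Letter-types: `l` for a pair of proper letters, `p` for (letter, padding),
`q` for (padding, letter). -/
inductive LTy | l | p | q
deriving DecidableEq

/-- The five types of (well-formed) synchronous words:
`ll`, `ll→lb` (= `lllb`), `lb`, `ll→bl` (= `llbl`), `bl`. -/
inductive STy | ll | lllb | lb | llbl | bl
deriving DecidableEq

namespace STy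

/-- Letter-type of the first letter. -/
def src : STy → LTy
  | ll => .l | lllb => .l | lb => .p | llbl => .l | bl => .q

/-- Letter-type of the last letter. -/
def tgt : STy → LTy
  | ll => .l | lllb => .p | lb => .p | llbl => .q | bl => .q

/-- `σ = α→β` is compatible with `τ = β'→γ` iff `β = β'` or `β = ll`. -/
def compat (σ τ : STy) : Prop := σ.tgt = τ.src ∨ σ.tgt = LTy.l

/-- Product of compatible types (junk on incompatible pairs). -/
def comp : STy → STy → STy
  | ll, ll => ll
  | ll, lllb => lllb
  | ll, lb => lllb
  | ll, llbl => llbl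
  | ll, bl => llbl
  | lllb, _ => lllb
  | lb, _ => lb
  | llbl, _ => llbl
  | bl, _ => bl

end STy

/-- A synchronous algebra: a `STy`-typed set with a dependency relation and a
partial associative product defined exactly on compatible pairs, monotone with
respect to dependency, with units.  The partial product is modelled as an
`Option`-valued total product. -/
structure SyncAlg where
  A : Type
  ty : A → STy
  dep : A → A → Prop
  mul : A → A → Option A
  dep_refl : ∀ x, dep x x
  dep_symm : ∀ {x y}, dep x y → dep y x
  dep_eq : ∀ {x y}, dep x y → ty x = ty y → x = y
  mul_defined : ∀ x y, (mul x y).isSome ↔ (ty x).compat (ty y)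
  ty_mul : ∀ {x y z}, mul x y = some z → ty z = (ty x).comp (ty y)
  mul_assoc : ∀ x y z,
    (mul x y).bind (fun a => mul a z) = (mul y z).bind (fun b => mul x b)
  dep_mul_left : ∀ {x x' y z z'}, dep x x' →
    mul x y = some z → mul x' y = some z' → dep z z'
  dep_mul_right : ∀ {x x' y z z'}, dep x x' →
    mul y x = some z → mul y x' = some z' → dep z z'
  unit : STy → A
  ty_unit : ∀ τ, ty (unit τ) = τ
  unit_mul : ∀ {τ x z}, mul (unit τ) x = some z → dep z x
  mul_unit : ∀ {τ x z}, mul x (unit τ) = some z → dep z x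
  unit_lllb : mul (unit .ll) (unit .lb) = some (unit .lllb)
  unit_llbl : mul (unit .ll) (unit .bl) = some (unit .llbl)

namespace SyncAlg

/-- A closed subset of a synchronous algebra: saturated under dependency. -/
def Closed (S : SyncAlg) (C : Set S.A) : Prop :=
  ∀ {x y : S.A}, S.dep x y → (x ∈ C ↔ y ∈ C)

/-- Two-sided partial product `x·a·y`. -/
def mul3 (S : SyncAlg) (x a y : S.A) : Option S.A :=
  (S.mul x a).bind fun u => S.mul u y

/-- The syntactic congruence of a subset `C` of a synchronous algebra. -/
def synCong (S : SyncAlg) (C : Set S.A) (a b : S.A) : Prop :=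
  (∀ x y u v, S.mul3 x a y = some u → S.mul3 x b y = some v → (u ∈ C ↔ v ∈ C)) ∧
  (∀ x u v, S.mul x a = some u → S.mul x b = some v → (u ∈ C ↔ v ∈ C)) ∧
  (∀ y u v, S.mul a y = some u → S.mul b y = some v → (u ∈ C ↔ v ∈ C))

/-- Left residual `x⁻¹C` of a closed subset `C` by an element `x`. -/
def lres (S : SyncAlg) (x : S.A) (C : Set S.A) : Set S.A :=
  { y | ∃ y' u, S.synCong C y' y ∧ S.mul x y' = some u ∧ u ∈ C }

/-- Right residual `C·x⁻¹` of a closed subset `C` by an element `x`. -/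
def rres (S : SyncAlg) (x : S.A) (C : Set S.A) : Set S.A :=
  { y | ∃ y' u, S.synCong C y' y ∧ S.mul y' x = some u ∧ u ∈ C }

end SyncAlg

/-- Morphisms of synchronous algebras: preserve types, units, product and
dependency. -/
structure SyncHom (S T : SyncAlg) where
  toFun : S.A → T.A
  map_ty : ∀ x, T.ty (toFun x) = S.ty x
  map_unit : ∀ τ, toFun (S.unit τ) = T.unit τ
  map_mul : ∀ {x y z}, S.mul x y = some z →
    T.mul (toFun x) (toFun y) = some (toFun z)
  map_dep : ∀ {x y}, S.dep x y → T.dep (toFun x) (toFun y)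
/-- Synchronous words over an alphabet `α`, organized by their five types. -/
inductive SyncW (α : Type) : Type
  | wll : List (α × α) → SyncW α
  | wlllb : List (α × α) → List α → SyncW α
  | wlb : List α → SyncW α
  | wllbl : List (α × α) → List α → SyncW α
  | wbl : List α → SyncW α

namespace SyncW

variable {α : Type}

/-- The type of a synchronous word. -/
def ty : SyncW α → STy
  | wll _ => .ll | wlllb _ _ => .lllb | wlb _ => .lb | wllbl _ _ => .llbl | wbl _ => .bl

/-- Base identifications of the dependency relation on synchronous words. -/
inductive dep0 : SyncW α → SyncW α → Prop
  | ll_lllb (w : List (α × α)) : dep0 (wll w) (wlllb w [])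
  | ll_llbl (w : List (α × α)) : dep0 (wll w) (wllbl w [])
  | lb_lllb (s : List α) : dep0 (wlb s) (wlllb [] s)
  | bl_llbl (s : List α) : dep0 (wbl s) (wllbl [] s)

/-- The dependency relation: reflexive-symmetric closure of `dep0`. -/
def dep (x y : SyncW α) : Prop := x = y ∨ dep0 x y ∨ dep0 y x

/-- Concatenation of synchronous words (partial). -/
def mul : SyncW α → SyncW α → Option (SyncW α)
  | wll w, wll w' => some (wll (w ++ w'))
  | wll w, wlllb w' s => some (wlllb (w ++ w') s)
  | wll w, wlb s => some (wlllb w s)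
  | wll w, wllbl w' s => some (wllbl (w ++ w') s)
  | wll w, wbl s => some (wllbl w s)
  | wlllb w s, wlb s' => some (wlllb w (s ++ s'))
  | wlb s, wlb s' => some (wlb (s ++ s'))
  | wllbl w s, wbl s' => some (wllbl w (s ++ s'))
  | wbl s, wbl s' => some (wbl (s ++ s'))
  | _, _ => none

/-- Decoding into the pair of words represented. -/
def decode : SyncW α → List α × List α
  | wll w => (w.map Prod.fst, w.map Prod.snd)
  | wlllb w s => (w.map Prod.fst ++ s, w.map Prod.snd)
  | wlb s => (s, [])
  | wllbl w s => (w.map Prod.fst, w.map Prod.snd ++ s)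
  | wbl s => ([], s)

end SyncW

set_option maxHeartbeats 2000000 in
/-- The free synchronous algebra `Sync(α)` of synchronous words over `α`. -/
def freeSync (α : Type) : SyncAlg where
  A := SyncW α
  ty := SyncW.ty
  dep := SyncW.dep
  mul := SyncW.mul
  dep_refl x := Or.inl rfl
  dep_symm h := by
    rcases h with rfl | h | h
    · exact Or.inl rfl
    · exact Or.inr (Or.inr h)
    · exact Or.inr (Or.inl h)
  dep_eq := by
    rintro x y (rfl | h | h) hty <;> first
      | rfl
      | (cases h <;> simp [SyncW.ty] at hty)
  mul_defined x y := by
    cases x <;> cases y <;>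
      simp [SyncW.mul, SyncW.ty, STy.compat, STy.tgt, STy.src]
  ty_mul := by
    intro x y z h
    cases x <;> cases y <;>
      simp [SyncW.mul] at h <;> subst h <;> rfl
  mul_assoc x y z := by
    cases x <;> cases y <;> cases z <;>
      simp [SyncW.mul, List.append_assoc]
  dep_mul_left := by
    intro x x' y z z' h h1 h2
    rcases h with rfl | h | h
    · rw [h1] at h2; injection h2 with h2; rw [h2]; exact Or.inl rfl
    · cases h <;> cases y <;>
        simp [SyncW.mul] at h1 h2 <;> subst h1 <;> subst h2 <;>
        first
          | exact Or.inl rfl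
          | exact Or.inr (Or.inl (by constructor))
          | exact Or.inr (Or.inr (by constructor))
    · cases h <;> cases y <;>
        simp [SyncW.mul] at h1 h2 <;> subst h1 <;> subst h2 <;>
        first
          | exact Or.inl rfl
          | exact Or.inr (Or.inl (by constructor))
          | exact Or.inr (Or.inr (by constructor))
  dep_mul_right := by
    intro x x' y z z' h h1 h2
    rcases h with rfl | h | h
    · rw [h1] at h2; injection h2 with h2; rw [h2]; exact Or.inl rfl
    · cases h <;> cases y <;>
        simp [SyncW.mul] at h1 h2 <;> subst h1 <;> subst h2 <;>
        first
          | exact Or.inl rfl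
          | exact Or.inr (Or.inl (by constructor))
          | exact Or.inr (Or.inr (by constructor))
    · cases h <;> cases y <;>
        simp [SyncW.mul] at h1 h2 <;> subst h1 <;> subst h2 <;>
        first
          | exact Or.inl rfl
          | exact Or.inr (Or.inl (by constructor))
          | exact Or.inr (Or.inr (by constructor))
  unit := fun τ => match τ with
    | .ll => .wll []
    | .lllb => .wlllb [] []
    | .lb => .wlb []
    | .llbl => .wllbl [] []
    | .bl => .wbl []
  ty_unit τ := by cases τ <;> rfl
  unit_mul := by
    intro τ x z h
    cases τ <;> cases x <;> simp [SyncW.mul] at h <;> subst h <;>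
      first
        | exact Or.inl rfl
        | exact Or.inr (Or.inl (by constructor))
        | exact Or.inr (Or.inr (by constructor))
  mul_unit := by
    intro τ x z h
    cases τ <;> cases x <;> simp [SyncW.mul] at h <;> subst h <;>
      first
        | exact Or.inl rfl
        | exact Or.inr (Or.inl (by constructor))
        | exact Or.inr (Or.inr (by constructor))
  unit_lllb := rfl
  unit_llbl := rfl

/-- The closed subset of `Sync(α)` induced by a relation `R ⊆ α* × α*`. -/
def projS {α : Type} (R : Set (List α × List α)) : Set (SyncW α) :=
  { x | x.decode ∈ R }

/-- `⟨φ, B, Acc⟩` recognizes the relation `R` when `Acc` is closed and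
`proj R = φ⁻¹[Acc]`. -/
def RecognizesRel {α : Type} (B : SyncAlg) (φ : SyncHom (freeSync α) B)
    (Acc : Set B.A) (R : Set (List α × List α)) : Prop :=
  B.Closed Acc ∧ projS R = φ.toFun ⁻¹' Acc

/-- The paired alphabet `Σ₂⊥ = (Σ×Σ) ⊕ (Σ×{⊥}) ⊕ ({⊥}×Σ)`. -/
def PL (α : Type) : Type := (α × α) ⊕ α ⊕ α

/-- A word over `Σ₂⊥` is well-formed when padding symbols are placed
consistently: a block of letter-pairs followed by a block of padded letters on
a single side. -/
def WF {α : Type} (l : List (PL α)) : Prop :=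
  ∃ (w : List (α × α)) (s : List α),
    l = w.map Sum.inl ++ s.map (fun a => Sum.inr (Sum.inl a)) ∨
    l = w.map Sum.inl ++ s.map (fun a => Sum.inr (Sum.inr a))

/-- Decode a word over `Σ₂⊥` into the pair of words it represents
(stripping padding symbols). -/
def decodeW {α : Type} (l : List (PL α)) : List α × List α :=
  (l.filterMap (fun x => match x with
      | Sum.inl p => some p.1
      | Sum.inr (Sum.inl a) => some a
      | Sum.inr (Sum.inr _) => none),
   l.filterMap (fun x => match x with
      | Sum.inl p => some p.2
      | Sum.inr (Sum.inl _) => none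
      | Sum.inr (Sum.inr a) => some a))

/-- The language over `Σ₂⊥` corresponding to a relation `R ⊆ α* × α*`:
well-formed words whose decoded pair lies in `R`. -/
def langOf {α : Type} (R : Set (List α × List α)) : Language (PL α) :=
  { l | WF l ∧ decodeW l ∈ R }

instance {α : Type} [DecidableEq α] : DecidableEq (PL α) :=
  inferInstanceAs (DecidableEq ((α × α) ⊕ α ⊕ α))

/-- Parse a word over `Σ₂⊥` into a synchronous word (with the canonical type
assignment of the consolidation: `(Σ×Σ)* ↦ ll`, `(Σ×⊥)⁺ ↦ lb`,
`(Σ×Σ)⁺(Σ×⊥)⁺ ↦ ll→lb`, and symmetrically), or `none` (the zero of the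
consolidated monoid) if the word is not well-formed. -/
def toSyncW? {α : Type} [DecidableEq α] (l : List (PL α)) : Option (SyncW α) :=
  let w : List (α × α) := l.filterMap (fun x => match x with
    | Sum.inl p => some p | _ => none)
  let s₁ : List α := l.filterMap (fun x => match x with
    | Sum.inr (Sum.inl a) => some a | _ => none)
  let s₂ : List α := l.filterMap (fun x => match x with
    | Sum.inr (Sum.inr a) => some a | _ => none)
  if l = w.map Sum.inl ++ s₁.map (fun a => Sum.inr (Sum.inl a)) then
    (if s₁ = [] then some (.wll w)
     else if w = [] then some (.wlb s₁) else some (.wlllb w s₁))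
  else if l = w.map Sum.inl ++ s₂.map (fun a => Sum.inr (Sum.inr a)) then
    (if w = [] then some (.wbl s₂) else some (.wllbl w s₂))
  else none

/-- The consolidation `φ₁ : (Σ₂⊥)* → A₁` of a synchronous algebra morphism
`φ : Sync(Σ) → A`: it sends non-well-formed words to the adjoined zero
(modelled by `none`) and a well-formed word to the image of the corresponding
synchronous word. -/
def consol {α : Type} [DecidableEq α] {B : SyncAlg}
    (φ : SyncHom (freeSync α) B) (l : List (PL α)) : Option B.A :=
  (toSyncW? l).map φ.toFun

/-! A word over `Σ₂⊥` is well-formed exactly when it is a block of letter pairs followed by a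
block of letters padded on one fixed side. On such a word the parser `toSyncW?` returns the
synchronous word with the same decoding, and on all other words it returns the zero. Hence
`l ∈ langOf R` iff `l` parses to some `x` with `x.decode ∈ R`, i.e. `x ∈ projS R = φ⁻¹[Acc]`,
which says exactly that `φ₁ l = φ x` lies in `Acc`. -/

section Consolidation

variable {α : Type}

def leftPadded (w : List (α × α)) (s : List α) : List (PL α) :=
  w.map Sum.inl ++ s.map (fun a => Sum.inr (Sum.inl a))

def rightPadded (w : List (α × α)) (s : List α) : List (PL α) :=
  w.map Sum.inl ++ s.map (fun a => Sum.inr (Sum.inr a))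

def SyncW.ofLeftPadded (w : List (α × α)) (s : List α) : SyncW α :=
  if s = [] then .wll w else if w = [] then .wlb s else .wlllb w s

def SyncW.ofRightPadded (w : List (α × α)) (s : List α) : SyncW α :=
  if s = [] then .wll w else if w = [] then .wbl s else .wllbl w s

theorem wf_iff {l : List (PL α)} :
    WF l ↔ ∃ w s, l = leftPadded w s ∨ l = rightPadded w s := Iff.rfl

theorem decodeW_leftPadded (w : List (α × α)) (s : List α) :
    decodeW (leftPadded w s) = (w.map Prod.fst ++ s, w.map Prod.snd) := by
  -- `PL` is not reducible: unless it is unfolded, `simp` cannot match the list lemmas.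
  unfold decodeW leftPadded PL
  simp [List.filterMap_map]

theorem decodeW_rightPadded (w : List (α × α)) (s : List α) :
    decodeW (rightPadded w s) = (w.map Prod.fst, w.map Prod.snd ++ s) := by
  unfold decodeW rightPadded PL
  simp [List.filterMap_map]

theorem SyncW.decode_ofLeftPadded (w : List (α × α)) (s : List α) :
    (ofLeftPadded w s).decode = (w.map Prod.fst ++ s, w.map Prod.snd) := by
  unfold ofLeftPadded
  split_ifs <;> simp_all [decode]

theorem SyncW.decode_ofRightPadded (w : List (α × α)) (s : List α) :
    (ofRightPadded w s).decode = (w.map Prod.fst, w.map Prod.snd ++ s) := by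
  unfold ofRightPadded
  split_ifs <;> simp_all [decode]

variable [DecidableEq α]

theorem toSyncW?_leftPadded (w : List (α × α)) (s : List α) :
    toSyncW? (leftPadded w s) = some (SyncW.ofLeftPadded w s) := by
  unfold toSyncW? leftPadded PL
  simp [List.filterMap_map, SyncW.ofLeftPadded, apply_ite some]

theorem toSyncW?_rightPadded (w : List (α × α)) (s : List α) :
    toSyncW? (rightPadded w s) = some (SyncW.ofRightPadded w s) := by
  unfold toSyncW? rightPadded PL
  simp [List.filterMap_map, SyncW.ofRightPadded, apply_ite some]

theorem toSyncW?_eq_none_of_not_wf {l : List (PL α)} (hl : ¬ WF l) : toSyncW? l = none := by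
  simp only [WF, not_exists, not_or] at hl
  unfold toSyncW?
  simp only [hl, if_false]

theorem isSome_toSyncW?_iff_wf {l : List (PL α)} : (toSyncW? l).isSome ↔ WF l := by
  refine ⟨fun h => not_not.mp fun hl => ?_, ?_⟩
  · simp [toSyncW?_eq_none_of_not_wf hl] at h
  · rw [wf_iff]
    rintro ⟨w, s, rfl | rfl⟩ <;> simp [toSyncW?_leftPadded, toSyncW?_rightPadded]

theorem decode_eq_decodeW_of_toSyncW?_eq_some {l : List (PL α)} {x : SyncW α}
    (hx : toSyncW? l = some x) : x.decode = decodeW l := by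
  obtain ⟨w, s, rfl | rfl⟩ := wf_iff.mp (isSome_toSyncW?_iff_wf.mp (Option.isSome_of_eq_some hx))
  · rw [toSyncW?_leftPadded, Option.some_inj] at hx
    rw [← hx, SyncW.decode_ofLeftPadded, decodeW_leftPadded]
  · rw [toSyncW?_rightPadded, Option.some_inj] at hx
    rw [← hx, SyncW.decode_ofRightPadded, decodeW_rightPadded]

theorem mem_langOf_iff {R : Set (List α × List α)} {l : List (PL α)} :
    l ∈ langOf R ↔ ∃ x, toSyncW? l = some x ∧ x.decode ∈ R := by
  constructor
  · rintro ⟨hl, hR⟩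
    obtain ⟨x, hx⟩ := Option.isSome_iff_exists.mp (isSome_toSyncW?_iff_wf.mpr hl)
    exact ⟨x, hx, decode_eq_decodeW_of_toSyncW?_eq_some hx ▸ hR⟩
  · rintro ⟨x, hx, hR⟩
    exact ⟨isSome_toSyncW?_iff_wf.mp (Option.isSome_of_eq_some hx),
      decode_eq_decodeW_of_toSyncW?_eq_some hx ▸ hR⟩

theorem consol_eq_some_iff {B : SyncAlg} (φ : SyncHom (freeSync α) B) {l : List (PL α)}
    {a : B.A} : consol φ l = some a ↔ ∃ x, toSyncW? l = some x ∧ φ.toFun x = a :=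
  Option.map_eq_some_iff

end Consolidation

/-- If a synchronous algebra morphism `φ : Sync(Σ) → A`
recognizes a relation `R` (via the closed subset `Acc`), then its consolidation
`φ₁ : (Σ₂⊥)* → A₁` recognizes `R` viewed as a language over `Σ₂⊥`: the language
of `R` is the preimage under `φ₁` of (the copy in `A₁` of) `Acc`. -/
theorem consolidation_recognizes (α : Type) [DecidableEq α] (B : SyncAlg)
    (φ : SyncHom (freeSync α) B) (Acc : Set B.A) (R : Set (List α × List α))
    (hrec : RecognizesRel B φ Acc R) :
    langOf R = { l : List (PL α) | ∃ a, consol φ l = some a ∧ a ∈ Acc } := by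
  have hmem (x : SyncW α) : x.decode ∈ R ↔ φ.toFun x ∈ Acc := Set.ext_iff.mp hrec.2 x
  ext l
  rw [mem_langOf_iff]
  constructor
  · rintro ⟨x, hx, hR⟩
    exact ⟨φ.toFun x, (consol_eq_some_iff φ).mpr ⟨x, hx, rfl⟩, (hmem x).mp hR⟩
  · rintro ⟨a, hl, hAcc⟩
    obtain ⟨x, hx, rfl⟩ := (consol_eq_some_iff φ).mp hl
    exact ⟨x, hx, (hmem x).mpr hAcc⟩
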